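/- arXiv:1808.00625 — 2 statements merged into one kernel-verified Lean document; each statement's English description precedes it below -/
import Mathlib

section
/- Gauss's summation theorem: if Re(c - a - b) > 0 and c is not a nonpositive integer, then the hypergeometric series Σ_{m≥0} (a)_m (b)_m / ((c)_m m!) converges and equals Γ(c)Γ(c-a-b)/(Γ(c-a)Γ(c-b)). -/
open scoped Nat

/-!
Write `F(c) = Σ tₘ(c)` with `tₘ(c) = (a)ₘ(b)ₘ/((c)ₘ m!)`. Termwise,
`c(c-a-b) tₘ(c) - (c-a)(c-b) tₘ(c+1)` telescopes with boundary term `c m tₘ(c) → 0`, which gives the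
contiguous relation `c(c-a-b) F(c) = (c-a)(c-b) F(c+1)` and, iterated,
`F(c) = (c-a)ₙ(c-b)ₙ / ((c)ₙ(c-a-b)ₙ) · F(c+n)`. As `n → ∞` the Pochhammer quotient tends to
`Γ(c)Γ(c-a-b)/(Γ(c-a)Γ(c-b))` by Euler's limit formula `Γ(z) = lim n^z n! / (z)ₙ₊₁`, while
`F(c+n) → 1` by dominated convergence. The same limit formula gives `(m+1) tₘ₊₁ = O(m^{-Re(c-a-b)})`,
hence convergence and the vanishing boundary term.
-/

/-- The Pochhammer symbol `(a)ₘ = a(a+1)⋯(a+m-1)` in `ℂ`. -/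
noncomputable def poch (a : ℂ) (m : ℕ) : ℂ := (ascPochhammer ℂ m).eval a

open Filter Finset Asymptotics Topology

lemma tsum_sub_add_one_of_tendsto_zero {G : Type*} [AddCommGroup G] [TopologicalSpace G]
    [IsTopologicalAddGroup G] [T2Space G] {u : ℕ → G} (hs : Summable fun n => u n - u (n + 1))
    (hu : Tendsto u atTop (𝓝 0)) : ∑' n, (u n - u (n + 1)) = u 0 :=
  tendsto_nhds_unique hs.hasSum.tendsto_sum_nat <| by
    simpa only [sum_range_sub', sub_zero] using tendsto_const_nhds.sub hu

lemma ne_neg_natCast_of_re_pos {z : ℂ} (hz : 0 < z.re) (j : ℕ) : z ≠ -j := by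
  rintro rfl
  simp only [Complex.neg_re, Complex.natCast_re, Left.neg_pos_iff] at hz
  linarith [j.cast_nonneg (α := ℝ)]

lemma add_natCast_ne_neg_natCast {z : ℂ} (hz : ∀ j : ℕ, z ≠ -j) (n j : ℕ) : z + n ≠ -j := by
  intro h
  exact hz (j + n) (by push_cast; linear_combination h)

lemma norm_ofReal_add_natCast {x : ℝ} (hx : 0 ≤ x) (j : ℕ) : ‖(x : ℂ) + j‖ = x + j := by
  exact_mod_cast Complex.norm_of_nonneg (by positivity : 0 ≤ x + j)

section Pochhammer

variable {z w : ℂ} {m : ℕ}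

lemma poch_succ (z : ℂ) (m : ℕ) : poch z (m + 1) = poch z m * (z + m) :=
  ascPochhammer_succ_eval m z

lemma poch_eq_prod (z : ℂ) (m : ℕ) : poch z m = ∏ j ∈ range m, (z + j) := by
  induction m with
  | zero => simp [poch]
  | succ m ih => rw [poch_succ, ih, prod_range_succ]

lemma poch_succ_eq_mul_poch_add_one (z : ℂ) (m : ℕ) : poch z (m + 1) = z * poch (z + 1) m := by
  simp only [poch, ascPochhammer_succ_left, Polynomial.eval_mul, Polynomial.eval_X,
    Polynomial.eval_comp, Polynomial.eval_add, Polynomial.eval_one]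

lemma poch_ne_zero (hz : ∀ j : ℕ, z ≠ -j) (m : ℕ) : poch z m ≠ 0 := by
  rw [poch_eq_prod]
  exact prod_ne_zero_iff.mpr fun j _ hj => hz j (eq_neg_of_add_eq_zero_left hj)

lemma poch_eq_zero_of_lt {j : ℕ} (hz : z = -j) (hm : j < m) : poch z m = 0 := by
  rw [poch_eq_prod]
  exact prod_eq_zero (mem_range.mpr hm) (by rw [hz, neg_add_cancel])

lemma norm_poch_le_norm_poch (h : ∀ j : ℕ, ‖z + j‖ ≤ ‖w + j‖) (m : ℕ) :
    ‖poch z m‖ ≤ ‖poch w m‖ := by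
  simp only [poch_eq_prod, norm_prod]
  exact prod_le_prod (fun _ _ => norm_nonneg _) fun j _ => h j

lemma tendsto_norm_poch_add_nat (z : ℂ) (hm : m ≠ 0) :
    Tendsto (fun n : ℕ => ‖poch (z + n) m‖) atTop atTop := by
  refine Polynomial.tendsto_norm_atTop _ ?_ (tendsto_norm_atTop_iff_cobounded.mpr
    ((tendsto_const_add_cobounded z).comp tendsto_natCast_atTop_cobounded))
  rw [Polynomial.degree_eq_natDegree (monic_ascPochhammer ℂ m).ne_zero, ascPochhammer_natDegree]
  exact_mod_cast Nat.pos_of_ne_zero hm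

lemma Complex.GammaSeq_eq_div_poch (z : ℂ) (n : ℕ) :
    Complex.GammaSeq z n = (n : ℂ) ^ z * n ! / poch z (n + 1) := by
  rw [Complex.GammaSeq, poch_eq_prod]

lemma tendsto_poch_mul_poch_div_poch_mul_poch {z₁ z₂ w₁ w₂ : ℂ} (hw₁ : ∀ j : ℕ, w₁ ≠ -j)
    (hw₂ : ∀ j : ℕ, w₂ ≠ -j) (h : z₁ + z₂ = w₁ + w₂) :
    Tendsto (fun n => poch z₁ n * poch z₂ n / (poch w₁ n * poch w₂ n)) atTop
      (𝓝 (Complex.Gamma w₁ * Complex.Gamma w₂ / (Complex.Gamma z₁ * Complex.Gamma z₂))) := by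
  by_cases hz : (∃ j : ℕ, z₁ = -j) ∨ ∃ j : ℕ, z₂ = -j
  · have hΓ : Complex.Gamma z₁ * Complex.Gamma z₂ = 0 := by
      simpa [Complex.Gamma_eq_zero_iff] using hz
    -- the junk value `x / 0 = 0` is the limit of the eventually vanishing quotient
    rw [hΓ, div_zero]
    refine tendsto_const_nhds.congr' ?_
    obtain ⟨j, hj⟩ | ⟨j, hj⟩ := hz <;>
    · filter_upwards [eventually_gt_atTop j] with n hn
      simp [poch_eq_zero_of_lt hj hn]
  push Not at hz
  rw [← tendsto_add_atTop_iff_nat 1]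
  refine ((Complex.GammaSeq_tendsto_Gamma w₁).mul (Complex.GammaSeq_tendsto_Gamma w₂)).div
    ((Complex.GammaSeq_tendsto_Gamma z₁).mul (Complex.GammaSeq_tendsto_Gamma z₂))
    (mul_ne_zero (Complex.Gamma_ne_zero hz.1) (Complex.Gamma_ne_zero hz.2)) |>.congr' ?_
  filter_upwards [eventually_ne_atTop 0] with n hn
  have hn' : (n : ℂ) ≠ 0 := by exact_mod_cast hn
  have hpow : (n : ℂ) ^ z₁ * (n : ℂ) ^ z₂ = (n : ℂ) ^ w₁ * (n : ℂ) ^ w₂ := by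
    rw [← Complex.cpow_add _ _ hn', ← Complex.cpow_add _ _ hn', h]
  have := poch_ne_zero hz.1 (n + 1)
  have := poch_ne_zero hz.2 (n + 1)
  have := poch_ne_zero hw₁ (n + 1)
  have := poch_ne_zero hw₂ (n + 1)
  have hfact : (n ! : ℂ) ≠ 0 := by exact_mod_cast n.factorial_ne_zero
  have (z : ℂ) : (n : ℂ) ^ z ≠ 0 := by simp [hn]
  simp only [Pi.div_apply, Complex.GammaSeq_eq_div_poch]
  field_simp
  rw [← hpow, div_self (by simp [hn])]

end Pochhammer

section Hypergeometric

variable {a b c : ℂ}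

noncomputable def hyperTerm (a b c : ℂ) (m : ℕ) : ℂ := poch a m * poch b m / (poch c m * m !)

lemma hyperTerm_zero (a b c : ℂ) : hyperTerm a b c 0 = 1 := by simp [hyperTerm, poch]

lemma hyperTerm_succ (a b c : ℂ) (m : ℕ) :
    hyperTerm a b c (m + 1) = hyperTerm a b c m * ((a + m) * (b + m) / ((c + m) * (m + 1))) := by
  simp only [hyperTerm, poch_succ, Nat.factorial_succ, Nat.cast_mul, Nat.cast_succ, div_eq_mul_inv,
    mul_inv]
  ring

lemma hyperTerm_add_one_right (hc : c ≠ 0) (m : ℕ) :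
    hyperTerm a b (c + 1) m = hyperTerm a b c m * (c / (c + m)) := by
  have h : poch (c + 1) m = poch c m * (c + m) / c := by
    rw [← poch_succ, poch_succ_eq_mul_poch_add_one, mul_div_cancel_left₀ _ hc]
  simp only [hyperTerm, h, div_eq_mul_inv, mul_inv, inv_inv]
  ring

lemma hyperTerm_contiguous (hc : ∀ j : ℕ, c ≠ -j) (m : ℕ) :
    c * (c - a - b) * hyperTerm a b c m - (c - a) * (c - b) * hyperTerm a b (c + 1) m
      = c * m * hyperTerm a b c m - c * (m + 1 : ℕ) * hyperTerm a b c (m + 1) := by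
  have hcm : c + m ≠ 0 := fun h => hc m (eq_neg_of_add_eq_zero_left h)
  have hm : (m : ℂ) + 1 ≠ 0 := by exact_mod_cast m.succ_ne_zero
  rw [hyperTerm_succ, hyperTerm_add_one_right (by simpa using hc 0)]
  push_cast
  field_simp
  ring

lemma natCast_add_one_mul_hyperTerm_succ (ha : ∀ j : ℕ, a ≠ -j) (hb : ∀ j : ℕ, b ≠ -j)
    (hc : ∀ j : ℕ, c ≠ -j) {n : ℕ} (hn : n ≠ 0) :
    ((n : ℂ) + 1) * hyperTerm a b c (n + 1) = (n : ℂ) ^ (a + b - c) *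
      (Complex.GammaSeq c n / (Complex.GammaSeq a n * Complex.GammaSeq b n)) := by
  have hn' : (n : ℂ) ≠ 0 := by exact_mod_cast hn
  have hpow (z : ℂ) : (n : ℂ) ^ z ≠ 0 := by simp [hn]
  have hfact : (n ! : ℂ) ≠ 0 := by exact_mod_cast n.factorial_ne_zero
  have := poch_ne_zero ha (n + 1)
  have := poch_ne_zero hb (n + 1)
  have := poch_ne_zero hc (n + 1)
  simp only [hyperTerm, Complex.GammaSeq_eq_div_poch, Complex.cpow_sub _ _ hn',
    Complex.cpow_add _ _ hn', Nat.factorial_succ, Nat.cast_mul, Nat.cast_succ]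
  field_simp
  exact (div_self (by simp [hpow])).symm

lemma isBigO_hyperTerm (hc : ∀ j : ℕ, c ≠ -j) :
    (fun n : ℕ => ((n : ℂ) + 1) * hyperTerm a b c (n + 1)) =O[atTop]
      fun n : ℕ => (n : ℝ) ^ (a + b - c).re := by
  by_cases hab : (∃ j : ℕ, a = -j) ∨ ∃ j : ℕ, b = -j
  · refine EventuallyEq.trans_isBigO ?_ (isBigO_zero _ _)
    obtain ⟨j, hj⟩ | ⟨j, hj⟩ := hab <;>
    · filter_upwards [eventually_ge_atTop j] with n hn
      simp [hyperTerm, poch_eq_zero_of_lt hj (Nat.lt_succ_of_le hn)]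
  push Not at hab
  have hratio := ((Complex.GammaSeq_tendsto_Gamma c).div
    ((Complex.GammaSeq_tendsto_Gamma a).mul (Complex.GammaSeq_tendsto_Gamma b))
    (mul_ne_zero (Complex.Gamma_ne_zero hab.1) (Complex.Gamma_ne_zero hab.2))).isBigO_one ℝ
  have hpow : (fun n : ℕ => (n : ℂ) ^ (a + b - c)) =O[atTop] fun n : ℕ => (n : ℝ) ^ (a + b - c).re :=
    isBigO_norm_left.mp <| EventuallyEq.isBigO <| by
      filter_upwards [eventually_gt_atTop 0] with n hn
      exact Complex.norm_natCast_cpow_of_pos hn _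
  refine (hpow.mul hratio).congr' ?_ (by simp)
  filter_upwards [eventually_ne_atTop 0] with n hn
  exact (natCast_add_one_mul_hyperTerm_succ hab.1 hab.2 hc hn).symm

lemma re_add_sub_eq_neg (a b c : ℂ) : (a + b - c).re = -(c - a - b).re := by simp; ring

lemma summable_norm_hyperTerm (hc : ∀ j : ℕ, c ≠ -j) (hre : 0 < (c - a - b).re) :
    Summable fun m => ‖hyperTerm a b c m‖ := by
  have hinv : (fun n : ℕ => ((n : ℂ) + 1)⁻¹) =O[atTop] fun n : ℕ => (n : ℝ) ^ (-1 : ℝ) := by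
    refine IsBigO.of_bound 1 ?_
    filter_upwards [eventually_gt_atTop 0] with n hn
    have hn' : (0 : ℝ) < n := by exact_mod_cast hn
    have hnorm : ‖(n : ℂ) + 1‖ = n + 1 := by exact_mod_cast Complex.norm_natCast (n + 1)
    rw [Real.rpow_neg_one, norm_inv, norm_inv, one_mul, Real.norm_of_nonneg hn'.le, hnorm]
    exact inv_anti₀ hn' (by linarith)
  refine (summable_nat_add_iff 1).mp <| summable_of_isBigO_nat
    (Real.summable_nat_rpow.mpr (by rw [re_add_sub_eq_neg]; linarith : -1 + (a + b - c).re < -1))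
    ((hinv.mul (isBigO_hyperTerm (a := a) (b := b) hc)).norm_left.congr' ?_ ?_)
  · filter_upwards with n
    rw [inv_mul_cancel_left₀ (by exact_mod_cast n.succ_ne_zero)]
  · filter_upwards [eventually_gt_atTop 0] with n hn
    rw [Real.rpow_add (by exact_mod_cast hn)]

lemma tendsto_natCast_mul_hyperTerm (hc : ∀ j : ℕ, c ≠ -j) (hre : 0 < (c - a - b).re) :
    Tendsto (fun m : ℕ => (m : ℂ) * hyperTerm a b c m) atTop (𝓝 0) := by
  rw [← tendsto_add_atTop_iff_nat 1]
  push_cast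
  refine (isBigO_hyperTerm hc).trans_tendsto ?_
  rw [re_add_sub_eq_neg]
  exact (tendsto_rpow_neg_atTop hre).comp tendsto_natCast_atTop_atTop

lemma tendsto_hyperTerm_add_nat (a b c : ℂ) (m : ℕ) :
    Tendsto (fun n : ℕ => hyperTerm a b (c + n) m) atTop (𝓝 (if m = 0 then 1 else 0)) := by
  rcases eq_or_ne m 0 with rfl | hm
  · simp [hyperTerm_zero]
  rw [if_neg hm, tendsto_zero_iff_norm_tendsto_zero]
  simp only [hyperTerm, norm_div, norm_mul]
  exact tendsto_const_nhds.div_atTop <| (tendsto_norm_poch_add_nat c hm).atTop_mul_const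
    (by simp [Nat.factorial_pos])

lemma norm_hyperTerm_le_norm_hyperTerm {a' b' c' : ℂ} (ha : ∀ j : ℕ, ‖a + j‖ ≤ ‖a' + j‖)
    (hb : ∀ j : ℕ, ‖b + j‖ ≤ ‖b' + j‖) (hc : ∀ j : ℕ, ‖c' + j‖ ≤ ‖c + j‖)
    (hc' : ∀ j : ℕ, c' ≠ -j) (m : ℕ) :
    ‖hyperTerm a b c m‖ ≤ ‖hyperTerm a' b' c' m‖ := by
  simp only [hyperTerm, norm_div, norm_mul]
  gcongr
  · simp [poch_ne_zero hc', Nat.factorial_pos]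
  · exact norm_poch_le_norm_poch ha m
  · exact norm_poch_le_norm_poch hb m
  · exact norm_poch_le_norm_poch hc m

noncomputable def hyperSum (a b c : ℂ) : ℂ := ∑' m, hyperTerm a b c m

lemma hyperSum_eq_mul_hyperSum_add_one (hc : ∀ j : ℕ, c ≠ -j) (hre : 0 < (c - a - b).re) :
    hyperSum a b c = (c - a) * (c - b) / (c * (c - a - b)) * hyperSum a b (c + 1) := by
  have hs := (summable_norm_hyperTerm hc hre).of_norm
  have hs₁ : Summable (hyperTerm a b (c + 1)) := by
    refine (summable_norm_hyperTerm (by simpa using add_natCast_ne_neg_natCast hc 1) ?_).of_norm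
    simp only [Complex.sub_re, Complex.add_re, Complex.one_re] at hre ⊢
    linarith
  have htel := tsum_sub_add_one_of_tendsto_zero (u := fun m : ℕ => c * m * hyperTerm a b c m)
    (funext (hyperTerm_contiguous hc) ▸ (hs.mul_left _).sub (hs₁.mul_left _))
    (by simpa [mul_assoc] using (tendsto_natCast_mul_hyperTerm hc hre).const_mul c)
  simp only [← hyperTerm_contiguous hc, (hs.mul_left _).tsum_sub (hs₁.mul_left _), tsum_mul_left,
    Nat.cast_zero, mul_zero, zero_mul] at htel
  have hc₀ : c ≠ 0 := by simpa using hc 0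
  have hcab : c - a - b ≠ 0 := by simpa using ne_neg_natCast_of_re_pos hre 0
  rw [hyperSum, hyperSum, div_mul_eq_mul_div, eq_div_iff (mul_ne_zero hc₀ hcab)]
  linear_combination htel

lemma hyperSum_eq_mul_hyperSum_add_nat (hc : ∀ j : ℕ, c ≠ -j) (hre : 0 < (c - a - b).re) (n : ℕ) :
    hyperSum a b c = poch (c - a) n * poch (c - b) n / (poch c n * poch (c - a - b) n) *
      hyperSum a b (c + n) := by
  induction n with
  | zero => simp [poch]
  | succ n ih =>
    have hren : 0 < (c + n - a - b).re := by
      simp only [Complex.sub_re, Complex.add_re, Complex.natCast_re] at hre ⊢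
      linarith [n.cast_nonneg (α := ℝ)]
    rw [ih, hyperSum_eq_mul_hyperSum_add_one (add_natCast_ne_neg_natCast hc n) hren,
      poch_succ, poch_succ, poch_succ, poch_succ, Nat.cast_succ, ← add_assoc]
    simp only [div_eq_mul_inv, mul_inv]
    ring

lemma tendsto_hyperSum_add_nat (a b c : ℂ) :
    Tendsto (fun n : ℕ => hyperSum a b (c + n)) atTop (𝓝 1) := by
  set M : ℝ := ‖a‖ + ‖b‖ + 1
  have hM : 0 < M := by positivity
  have hsum : Summable fun m => ‖hyperTerm ‖a‖ ‖b‖ M m‖ :=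
    summable_norm_hyperTerm (ne_neg_natCast_of_re_pos (by simpa using hM)) (by simp [M]; linarith)
  have hdom (z : ℂ) (j : ℕ) : ‖z + j‖ ≤ ‖(‖z‖ : ℂ) + j‖ := by
    rw [norm_ofReal_add_natCast (norm_nonneg z)]
    exact (norm_add_le _ _).trans_eq (by simp)
  have hbound : ∀ᶠ n : ℕ in atTop, ∀ m, ‖hyperTerm a b (c + n) m‖ ≤ ‖hyperTerm ‖a‖ ‖b‖ M m‖ := by
    filter_upwards [eventually_ge_atTop ⌈‖c‖ + M⌉₊] with n hn m
    refine norm_hyperTerm_le_norm_hyperTerm (hdom a) (hdom b) (fun j => ?_)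
      (ne_neg_natCast_of_re_pos (by simpa using hM)) m
    have hnc := Nat.ceil_le.mp hn
    have h := norm_sub_norm_le ((n + j : ℕ) : ℂ) (-c)
    rw [norm_neg, Complex.norm_natCast, sub_neg_eq_add] at h
    push_cast at h
    calc ‖(M : ℂ) + j‖ = M + j := norm_ofReal_add_natCast hM.le j
      _ ≤ n + j - ‖c‖ := by linarith
      _ ≤ ‖c + n + j‖ := h.trans_eq (by ring_nf)
  simpa [hyperSum] using
    tendsto_tsum_of_dominated_convergence hsum (tendsto_hyperTerm_add_nat a b c) hbound
end Hypergeometric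

/-- Gauss's summation theorem: if `Re(c - a - b) > 0` and `c` is not
a nonpositive integer, then the hypergeometric series `Σ (a)ₘ(b)ₘ/((c)ₘ m!)`
converges and equals `Γ(c)Γ(c-a-b)/(Γ(c-a)Γ(c-b))`. -/
theorem statement9 (a b c : ℂ) (hc : ∀ m : ℕ, c ≠ -(m : ℂ))
    (hre : 0 < (c - a - b).re) :
    Summable (fun m : ℕ => poch a m * poch b m / (poch c m * (m ! : ℂ)))
      ∧ ∑' m : ℕ, poch a m * poch b m / (poch c m * (m ! : ℂ))
          = Complex.Gamma c * Complex.Gamma (c - a - b)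
            / (Complex.Gamma (c - a) * Complex.Gamma (c - b)) := by
  refine ⟨(summable_norm_hyperTerm hc hre).of_norm, ?_⟩
  change hyperSum a b c = _
  have hlim := (tendsto_poch_mul_poch_div_poch_mul_poch (z₁ := c - a) (z₂ := c - b) hc
    (ne_neg_natCast_of_re_pos hre) (by ring)).mul (tendsto_hyperSum_add_nat a b c)
  rw [mul_one] at hlim
  exact tendsto_nhds_unique
    (tendsto_const_nhds.congr (hyperSum_eq_mul_hyperSum_add_nat hc hre)) hlim
end

section
/- Dirichlet kernel limit: if h ∈ L¹(ℝ) and its classical Fourier transform ĥ also belongs to L¹(ℝ), then for every μ ∈ ℝ, lim_{t→∞} (1/π) ∫_{-∞}^{∞} h(λ) sin((λ-μ)t)/(λ-μ) dλ = h(μ), where h is identified with the continuous representative given by Fourier inversion. -/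
/-!
Since `sin((λ - μ)t)/(λ - μ) = ½ ∫_{-t}^{t} e^{i(μ - λ)x} dx`, Fubini (legitimate because `h ∈ L¹`
and the `x`-range is bounded) turns the Dirichlet integral `(1/π) ∫ h(λ) sin((λ-μ)t)/(λ-μ) dλ` into
the truncated inversion integral `(1/2π) ∫_{-t}^{t} ĥ(x) e^{iμx} dx`, which converges to the full
one as `t → ∞` because `ĥ ∈ L¹`.
-/

open MeasureTheory Filter Topology Complex

theorem integral_cexp_ofReal_mul_I_symm (a t : ℝ) (ha : a ≠ 0) :
    ∫ x in (-t)..t, cexp (↑(a * x) * I) = 2 * ((Real.sin (a * t) / a : ℝ) : ℂ) := by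
  have haI : (a : ℂ) * I ≠ 0 := mul_ne_zero (ofReal_ne_zero.mpr ha) I_ne_zero
  simp_rw [ofReal_mul, mul_right_comm _ _ I]
  rw [integral_exp_mul_complex haI, mul_right_comm, mul_right_comm _ I,
    ← ofReal_mul, ← ofReal_mul, exp_mul_I, exp_mul_I, mul_neg, ofReal_neg, cos_neg, sin_neg]
  push_cast
  field_simp
  ring

theorem integrable_mul_cexp_ofReal_mul_I {α : Type*} [MeasurableSpace α] {μ : Measure α}
    {f : α → ℂ} (hf : Integrable f μ) {φ : α → ℝ} (hφ : AEStronglyMeasurable φ μ) :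
    Integrable (fun x => f x * cexp (φ x * I)) μ :=
  hf.mul_bdd (by fun_prop) (ae_of_all _ fun x => (norm_exp_ofReal_mul_I (φ x)).le)

theorem intervalIntegral_fourierIntegral_mul_cexp (h : ℝ → ℂ) (hh : Integrable h) (μ t : ℝ) :
    ∫ x in (-t)..t, (∫ l, h l * cexp (-I * x * l)) * cexp (I * μ * x) =
      2 * ∫ l, h l * ((Real.sin ((l - μ) * t) / (l - μ) : ℝ) : ℂ) := by
  have hint : Integrable (fun p : ℝ × ℝ => h p.2 * cexp (↑((μ - p.2) * p.1) * I))
      ((volume.restrict (Set.uIoc (-t) t)).prod volume) :=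
    haveI : IsFiniteMeasure (volume.restrict (Set.uIoc (-t) t)) :=
      isFiniteMeasure_restrict.mpr measure_Ioc_lt_top.ne
    integrable_mul_cexp_ofReal_mul_I (hh.comp_snd _) (by fun_prop)
  calc ∫ x in (-t)..t, (∫ l, h l * cexp (-I * x * l)) * cexp (I * μ * x)
      = ∫ x in (-t)..t, ∫ l, h l * cexp (↑((μ - l) * x) * I) := by
        refine intervalIntegral.integral_congr fun x _ => ?_
        rw [← integral_mul_const]
        congr 1 with l
        rw [mul_assoc, ← exp_add]
        push_cast
        ring_nf
    _ = ∫ l, ∫ x in (-t)..t, h l * cexp (↑((μ - l) * x) * I) := intervalIntegral_integral_swap hint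
    _ = ∫ l, 2 * (h l * ((Real.sin ((l - μ) * t) / (l - μ) : ℝ) : ℂ)) := by
        refine integral_congr_ae ?_
        filter_upwards [Measure.ae_ne volume μ] with l hl
        rw [intervalIntegral.integral_const_mul,
          integral_cexp_ofReal_mul_I_symm _ _ (sub_ne_zero.mpr hl.symm), ← neg_sub l μ, neg_mul,
          Real.sin_neg, neg_div_neg_eq]
        ring
    _ = 2 * ∫ l, h l * ((Real.sin ((l - μ) * t) / (l - μ) : ℝ) : ℂ) := integral_const_mul _ _

/-- Dirichlet kernel limit: if `h ∈ L¹(ℝ)` and its classical Fourier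
transform `ĥ(ξ) = ∫ h(λ)e^{-iξλ}dλ` is also in `L¹(ℝ)`, then for every `μ ∈ ℝ`,
`lim_{t→∞} (1/π) ∫ h(λ) sin((λ-μ)t)/(λ-μ) dλ` equals the value at `μ` of the
continuous representative of `h` given by Fourier inversion,
`(1/2π) ∫ ĥ(x) e^{iμx} dx`. -/
theorem statement13 (h : ℝ → ℂ) (hh : Integrable h)
    (hhat : ℝ → ℂ)
    (hdef : ∀ ξ : ℝ, hhat ξ = ∫ lam : ℝ, h lam * Complex.exp (-I * (ξ:ℂ) * (lam:ℂ)))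
    (hhat_int : Integrable hhat) :
    ∀ μ : ℝ,
      Tendsto (fun t : ℝ =>
          (1 / (Real.pi : ℂ)) * ∫ lam : ℝ, h lam * ((Real.sin ((lam - μ) * t) / (lam - μ) : ℝ) : ℂ))
        atTop
        (𝓝 ((1 / (2 * (Real.pi : ℂ))) * ∫ x : ℝ, hhat x * Complex.exp (I * (μ:ℂ) * (x:ℂ)))) := by
  intro μ
  have hint : Integrable fun x : ℝ => hhat x * cexp (I * μ * x) := by
    refine (integrable_mul_cexp_ofReal_mul_I hhat_int (φ := fun x => μ * x) (by fun_prop)).congr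
      (ae_of_all _ fun x => ?_)
    push_cast
    ring_nf
  refine ((intervalIntegral_tendsto_integral hint tendsto_neg_atTop_atBot tendsto_id).const_mul
    (1 / (2 * (Real.pi : ℂ)))).congr fun t => ?_
  simp only [id, hdef, intervalIntegral_fourierIntegral_mul_cexp h hh μ t]
  ring
end
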